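/- Let α = e^{2πi/3} and λ ≠ 0. The function φ(x) = e^{-iλx} + α² e^{-iαλx} + α e^{-iα²λx} is unbounded on [0,∞); consequently for any A ≠ 0, the integral ∫₀^∞ A φ(x) f(x) dx diverges for some f ∈ ℰ[0,∞), so the operator Sf = −i f''' on the half-line has no nonzero generalised eigenfunctions given by integral kernels of this form. -/

import Mathlib

open Complex MeasureTheory intervalIntegral

lemma cont_exp_mul (w : ℂ) : Continuous fun x : ℝ => Complex.exp (w * x) :=
  Complex.continuous_exp.comp (continuous_const.mul Complex.continuous_ofReal)

lemma exp_norm_le_one {w : ℂ} (hw : w.re ≤ 0) {x : ℝ} (hx : 0 ≤ x) :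
    ‖Complex.exp (w * x)‖ ≤ 1 := by
  rw [Complex.norm_exp]
  have : (w * (x : ℂ)).re = w.re * x := by simp [Complex.mul_re]
  rw [this]
  exact Real.exp_le_one_iff.mpr (mul_nonpos_of_nonpos_of_nonneg hw hx)

lemma key (w1 w2 w3 d1 d2 d3 : ℂ) (g : ℝ → ℂ)
    (hg : g = fun x : ℝ => d1 * Complex.exp (w1 * x) + d2 * Complex.exp (w2 * x)
      + d3 * Complex.exp (w3 * x))
    (hd1 : d1 ≠ 0) (h12 : w2 ≠ w1) (h13 : w3 ≠ w1)
    (hb : 0 < w1.re) (h2 : w2.re ≤ w1.re) (h3 : w3.re ≤ w1.re) :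
    ∃ P : ℝ, 0 < P ∧ ∀ k : ℕ,
      Real.exp (w1.re * (k * P)) ≤ ∫ x in Set.Ioc ((k : ℝ) * P) (((k : ℝ) + 1) * P), ‖g x‖ := by
  have hc2 : w2 - w1 ≠ 0 := sub_ne_zero.mpr h12
  have hc3 : w3 - w1 ≠ 0 := sub_ne_zero.mpr h13
  set C : ℝ := 2 * ‖d2‖ / ‖w2 - w1‖ + 2 * ‖d3‖ / ‖w3 - w1‖ with hC
  have hC0 : 0 ≤ C := by positivity
  have hd1n : (0:ℝ) < ‖d1‖ := norm_pos_iff.mpr hd1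
  set P : ℝ := (1 + C) / ‖d1‖ with hP
  have hP0 : 0 < P := by positivity
  refine ⟨P, hP0, fun k => ?_⟩
  set a : ℝ := (k : ℝ) * P with ha
  set b : ℝ := ((k : ℝ) + 1) * P with hbdef
  have ha0 : 0 ≤ a := mul_nonneg (Nat.cast_nonneg k) hP0.le
  have hab : a ≤ b := by nlinarith
  have hb0 : 0 ≤ b := le_trans ha0 hab
  have hba : b - a = P := by rw [ha, hbdef]; ring
  -- the auxiliary integrand
  set F : ℝ → ℂ := fun x => d1 + d2 * Complex.exp ((w2 - w1) * x) + d3 * Complex.exp ((w3 - w1) * x)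
    with hFdef
  have hid : ∀ x : ℝ, F x = g x * Complex.exp (-w1 * x) := by
    intro x
    have e2 : Complex.exp ((w2 - w1) * x) = Complex.exp (w2 * x) * Complex.exp (-w1 * x) := by
      rw [← Complex.exp_add]; exact congrArg Complex.exp (by ring)
    have e3 : Complex.exp ((w3 - w1) * x) = Complex.exp (w3 * x) * Complex.exp (-w1 * x) := by
      rw [← Complex.exp_add]; exact congrArg Complex.exp (by ring)
    have e1 : Complex.exp (w1 * x) * Complex.exp (-w1 * x) = 1 := by
      rw [← Complex.exp_add, show w1 * (x:ℂ) + -w1 * x = 0 by ring, Complex.exp_zero]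
    rw [hFdef, hg]
    simp only
    rw [e2, e3]
    linear_combination (-d1) * e1
  have i2 : IntervalIntegrable (fun x : ℝ => Complex.exp ((w2 - w1) * x)) volume a b :=
    (cont_exp_mul _).intervalIntegrable a b
  have i3 : IntervalIntegrable (fun x : ℝ => Complex.exp ((w3 - w1) * x)) volume a b :=
    (cont_exp_mul _).intervalIntegrable a b
  have hFval : ∫ x in a..b, F x = d1 * (P : ℂ)
      + d2 * ((Complex.exp ((w2 - w1) * b) - Complex.exp ((w2 - w1) * a)) / (w2 - w1))
      + d3 * ((Complex.exp ((w3 - w1) * b) - Complex.exp ((w3 - w1) * a)) / (w3 - w1)) := by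
    rw [hFdef]
    rw [integral_add (intervalIntegrable_const.add (i2.const_mul d2)) (i3.const_mul d3),
      integral_add intervalIntegrable_const (i2.const_mul d2),
      intervalIntegral.integral_const, intervalIntegral.integral_const_mul, intervalIntegral.integral_const_mul,
      integral_exp_mul_complex hc2, integral_exp_mul_complex hc3]
    rw [show (b - a) • d1 = ((b - a : ℝ) : ℂ) * d1 from Complex.real_smul, hba]
    ring
  -- lower bound
  have hY : ‖d2 * ((Complex.exp ((w2 - w1) * b) - Complex.exp ((w2 - w1) * a)) / (w2 - w1))‖
      ≤ 2 * ‖d2‖ / ‖w2 - w1‖ := by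
    rw [norm_mul, norm_div]
    have hnum : ‖Complex.exp ((w2 - w1) * b) - Complex.exp ((w2 - w1) * a)‖ ≤ 2 := by
      have := exp_norm_le_one (w := w2 - w1) (by simp [Complex.sub_re]; linarith) hb0
      have := exp_norm_le_one (w := w2 - w1) (by simp [Complex.sub_re]; linarith) ha0
      calc ‖Complex.exp ((w2 - w1) * b) - Complex.exp ((w2 - w1) * a)‖
          ≤ ‖Complex.exp ((w2 - w1) * b)‖ + ‖Complex.exp ((w2 - w1) * a)‖ := norm_sub_le _ _
        _ ≤ 2 := by linarith
    calc ‖d2‖ * (‖Complex.exp ((w2 - w1) * b) - Complex.exp ((w2 - w1) * a)‖ / ‖w2 - w1‖)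
        ≤ ‖d2‖ * (2 / ‖w2 - w1‖) := by gcongr
      _ = 2 * ‖d2‖ / ‖w2 - w1‖ := by ring
  have hZ : ‖d3 * ((Complex.exp ((w3 - w1) * b) - Complex.exp ((w3 - w1) * a)) / (w3 - w1))‖
      ≤ 2 * ‖d3‖ / ‖w3 - w1‖ := by
    rw [norm_mul, norm_div]
    have hnum : ‖Complex.exp ((w3 - w1) * b) - Complex.exp ((w3 - w1) * a)‖ ≤ 2 := by
      have := exp_norm_le_one (w := w3 - w1) (by simp [Complex.sub_re]; linarith) hb0
      have := exp_norm_le_one (w := w3 - w1) (by simp [Complex.sub_re]; linarith) ha0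
      calc ‖Complex.exp ((w3 - w1) * b) - Complex.exp ((w3 - w1) * a)‖
          ≤ ‖Complex.exp ((w3 - w1) * b)‖ + ‖Complex.exp ((w3 - w1) * a)‖ := norm_sub_le _ _
        _ ≤ 2 := by linarith
    calc ‖d3‖ * (‖Complex.exp ((w3 - w1) * b) - Complex.exp ((w3 - w1) * a)‖ / ‖w3 - w1‖)
        ≤ ‖d3‖ * (2 / ‖w3 - w1‖) := by gcongr
      _ = 2 * ‖d3‖ / ‖w3 - w1‖ := by ring
  have hlow : (1 : ℝ) ≤ ‖∫ x in a..b, F x‖ := by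
    have hX : ‖d1 * (P : ℂ)‖ = ‖d1‖ * P := by
      rw [norm_mul, Complex.norm_real, Real.norm_eq_abs, abs_of_pos hP0]
    have htri : ‖d1 * (P:ℂ)‖ ≤ ‖∫ x in a..b, F x‖
        + ‖d2 * ((Complex.exp ((w2 - w1) * b) - Complex.exp ((w2 - w1) * a)) / (w2 - w1))‖
        + ‖d3 * ((Complex.exp ((w3 - w1) * b) - Complex.exp ((w3 - w1) * a)) / (w3 - w1))‖ := by
      rw [hFval]
      set Y := d2 * ((Complex.exp ((w2 - w1) * b) - Complex.exp ((w2 - w1) * a)) / (w2 - w1))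
      set Z := d3 * ((Complex.exp ((w3 - w1) * b) - Complex.exp ((w3 - w1) * a)) / (w3 - w1))
      calc ‖d1 * (P:ℂ)‖ = ‖d1 * (P:ℂ) + Y + Z - Y - Z‖ := by congr 1; ring
        _ ≤ ‖d1 * (P:ℂ) + Y + Z - Y‖ + ‖Z‖ := norm_sub_le _ _
        _ ≤ ‖d1 * (P:ℂ) + Y + Z‖ + ‖Y‖ + ‖Z‖ := by
            have := norm_sub_le (d1 * (P:ℂ) + Y + Z) Y
            linarith
    have hd1P : ‖d1‖ * P = 1 + C := by
      rw [hP, mul_comm, div_mul_cancel₀ _ (ne_of_gt hd1n)]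
    rw [hX, hd1P] at htri
    linarith
  -- continuity of g
  have hgc : Continuous g := by
    rw [hg]
    exact ((continuous_const.mul (cont_exp_mul w1)).add
      (continuous_const.mul (cont_exp_mul w2))).add (continuous_const.mul (cont_exp_mul w3))
  have hFc : Continuous F := by
    rw [hFdef]
    exact (continuous_const.add (continuous_const.mul (cont_exp_mul _))).add
      (continuous_const.mul (cont_exp_mul _))
  -- upper bound
  have hup : ‖∫ x in a..b, F x‖ ≤ Real.exp (-(w1.re * a)) * ∫ x in Set.Ioc a b, ‖g x‖ := by
    calc ‖∫ x in a..b, F x‖ ≤ ∫ x in a..b, ‖F x‖ := norm_integral_le_integral_norm hab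
      _ ≤ ∫ x in a..b, ‖g x‖ * Real.exp (-(w1.re * a)) := by
          apply integral_mono_on hab (hFc.norm.intervalIntegrable a b)
            ((hgc.norm.mul continuous_const).intervalIntegrable a b)
          intro x hx
          rw [hid x, norm_mul]
          apply mul_le_mul_of_nonneg_left _ (norm_nonneg _)
          rw [Complex.norm_exp]
          have hre : (-w1 * (x:ℂ)).re = -(w1.re * x) := by simp [Complex.mul_re]
          rw [hre]
          apply Real.exp_le_exp.mpr
          have : a ≤ x := hx.1
          nlinarith
      _ = (∫ x in a..b, ‖g x‖) * Real.exp (-(w1.re * a)) := integral_mul_const _ _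
      _ = Real.exp (-(w1.re * a)) * ∫ x in Set.Ioc a b, ‖g x‖ := by
          rw [integral_of_le hab]; ring
  have h1 : (1:ℝ) ≤ Real.exp (-(w1.re * a)) * ∫ x in Set.Ioc a b, ‖g x‖ := le_trans hlow hup
  calc Real.exp (w1.re * a) = Real.exp (w1.re * a) * 1 := (mul_one _).symm
    _ ≤ Real.exp (w1.re * a) * (Real.exp (-(w1.re * a)) * ∫ x in Set.Ioc a b, ‖g x‖) :=
        mul_le_mul_of_nonneg_left h1 (Real.exp_pos _).le
    _ = ∫ x in Set.Ioc a b, ‖g x‖ := by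
        rw [← mul_assoc, ← Real.exp_add]; simp

lemma no_exp_bound (c M : ℝ) (hc : 0 < c) (h : ∀ k : ℕ, Real.exp (c * k) ≤ M) : False := by
  obtain ⟨k, hk⟩ := exists_nat_ge (M / c)
  have hM : M ≤ c * k := by
    rw [div_le_iff₀ hc] at hk; linarith [hk]
  have h1 := h k
  have h2 := Real.add_one_le_exp (c * k)
  linarith

lemma key3 (w1 w2 w3 d1 d2 d3 : ℂ) (g : ℝ → ℂ)
    (hg : g = fun x : ℝ => d1 * Complex.exp (w1 * x) + d2 * Complex.exp (w2 * x)
      + d3 * Complex.exp (w3 * x))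
    (hd1 : d1 ≠ 0) (hd2 : d2 ≠ 0) (hd3 : d3 ≠ 0)
    (hb : 0 < max (max w1.re w2.re) w3.re)
    (h12 : w1 ≠ w2) (h13 : w1 ≠ w3) (h23 : w2 ≠ w3) :
    ∃ P β : ℝ, 0 < P ∧ 0 < β ∧ ∀ k : ℕ,
      Real.exp (β * k) ≤ ∫ x in Set.Ioc ((k : ℝ) * P) (((k : ℝ) + 1) * P), ‖g x‖ := by
  rcases le_total w2.re w1.re with h21 | h12'
  · rcases le_total w3.re w1.re with h31 | h13'
    · -- w1 is max
      have hb1 : 0 < w1.re := lt_of_lt_of_le hb (max_le (max_le le_rfl h21) h31)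
      obtain ⟨P, hP, hk⟩ := key w1 w2 w3 d1 d2 d3 g hg hd1 (Ne.symm h12) (Ne.symm h13) hb1 h21 h31
      exact ⟨P, w1.re * P, hP, by positivity, fun k => le_of_eq_of_le
        (congrArg Real.exp (by ring)) (hk k)⟩
    · -- w3 is max
      have hb3 : 0 < w3.re := lt_of_lt_of_le hb (max_le (max_le (le_trans h13' le_rfl) (le_trans h21 h13')) le_rfl)
      have hg' : g = fun x : ℝ => d3 * Complex.exp (w3 * x) + d1 * Complex.exp (w1 * x)
          + d2 * Complex.exp (w2 * x) := by rw [hg]; funext x; ring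
      obtain ⟨P, hP, hk⟩ := key w3 w1 w2 d3 d1 d2 g hg' hd3 h13 h23
        hb3 h13' (le_trans h21 h13')
      exact ⟨P, w3.re * P, hP, by positivity, fun k => le_of_eq_of_le
        (congrArg Real.exp (by ring)) (hk k)⟩
  · rcases le_total w3.re w2.re with h32 | h23'
    · -- w2 is max
      have hb2 : 0 < w2.re := lt_of_lt_of_le hb (max_le (max_le h12' le_rfl) (le_trans h32 le_rfl))
      have hg' : g = fun x : ℝ => d2 * Complex.exp (w2 * x) + d1 * Complex.exp (w1 * x)
          + d3 * Complex.exp (w3 * x) := by rw [hg]; funext x; ring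
      obtain ⟨P, hP, hk⟩ := key w2 w1 w3 d2 d1 d3 g hg' hd2 h12 (Ne.symm h23) hb2 h12' h32
      exact ⟨P, w2.re * P, hP, by positivity, fun k => le_of_eq_of_le
        (congrArg Real.exp (by ring)) (hk k)⟩
    · -- w3 is max
      have hb3 : 0 < w3.re := lt_of_lt_of_le hb (max_le (max_le (le_trans h12' h23') h23') le_rfl)
      have hg' : g = fun x : ℝ => d3 * Complex.exp (w3 * x) + d1 * Complex.exp (w1 * x)
          + d2 * Complex.exp (w2 * x) := by rw [hg]; funext x; ring
      obtain ⟨P, hP, hk⟩ := key w3 w1 w2 d3 d1 d2 g hg' hd3 h13 h23 hb3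
        (le_trans h12' h23') h23'
      exact ⟨P, w3.re * P, hP, by positivity, fun k => le_of_eq_of_le
        (congrArg Real.exp (by ring)) (hk k)⟩


lemma iter_deriv_exp_mul (c : ℂ) (n : ℕ) :
    ∀ x : ℝ, iteratedDeriv n (fun y : ℝ => Complex.exp (c * y)) x
      = c ^ n * Complex.exp (c * x) := by
  induction n with
  | zero => intro x; simp
  | succ n ih =>
    intro x
    rw [iteratedDeriv_succ, funext ih]
    have H : HasDerivAt (fun y : ℝ => Complex.exp (c * (y : ℂ)))
        (Complex.exp (c * (x : ℂ)) * c) x := by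
      have h0 : HasDerivAt (fun y : ℝ => c * (y : ℂ)) c x := by
        simpa using (Complex.ofRealCLM.hasDerivAt (x := x)).const_mul c
      exact h0.cexp
    rw [(H.const_mul (c ^ n)).deriv]
    ring

theorem stmt8 (l : ℂ) (hl : l ≠ 0) :
    let α : ℂ := Complex.exp (2 * (Real.pi : ℂ) * Complex.I / 3)
    let φ : ℝ → ℂ := fun x => Complex.exp (-Complex.I * l * (x:ℂ))
      + α ^ 2 * Complex.exp (-Complex.I * α * l * (x:ℂ))
      + α * Complex.exp (-Complex.I * α ^ 2 * l * (x:ℂ))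
    (¬ ∃ M : ℝ, ∀ x : ℝ, 0 ≤ x → ‖φ x‖ ≤ M) ∧
    (∀ A : ℂ, A ≠ 0 → ∃ f : ℝ → ℂ, ∃ ε : ℝ, 0 < ε ∧ ContDiff ℝ (⊤ : ℕ∞) f ∧
      (∀ n : ℕ, ∃ C : ℝ, ∀ x : ℝ, 0 ≤ x → ‖iteratedDeriv n f x‖ ≤ C * Real.exp (-ε * x)) ∧
      ¬ IntegrableOn (fun x : ℝ => A * φ x * f x) (Set.Ioi 0)) := by
  intro α φ
  have hα : α = Complex.exp (2 * (Real.pi : ℂ) * Complex.I / 3) := rfl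
  have hz : (2 * (Real.pi : ℂ) * Complex.I / 3) = ((2 * Real.pi / 3 : ℝ) : ℂ) * Complex.I := by
    push_cast; ring
  have hsin : 0 < Real.sin (2 * Real.pi / 3) := by
    apply Real.sin_pos_of_pos_of_lt_pi
    · positivity
    · linarith [Real.pi_pos]
  have hαim : 0 < α.im := by
    rw [hα, hz, Complex.exp_ofReal_mul_I_im]; exact hsin
  have hα1 : α ≠ 1 := by
    intro h; rw [h] at hαim; simp at hαim
  have hα0 : α ≠ 0 := by rw [hα]; exact Complex.exp_ne_zero _
  have hα3 : α ^ 3 = 1 := by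
    rw [hα, ← Complex.exp_nat_mul]
    rw [show ((3 : ℕ) : ℂ) * (2 * (Real.pi : ℂ) * Complex.I / 3) = 2 * Real.pi * Complex.I by
      push_cast; ring]
    exact Complex.exp_two_pi_mul_I
  have hsum : 1 + α + α ^ 2 = 0 := by
    have hfac : (α - 1) * (α ^ 2 + α + 1) = 0 := by linear_combination hα3
    rcases mul_eq_zero.mp hfac with h | h
    · exact absurd (sub_eq_zero.mp h) hα1
    · linear_combination h
  have hα21 : α ^ 2 ≠ 1 := by
    intro h
    apply hα1
    calc α = 1 * α := (one_mul α).symm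
      _ = α ^ 2 * α := by rw [h]
      _ = α ^ 3 := by ring
      _ = 1 := hα3
  have hα2α : α ^ 2 ≠ α := by
    intro h
    apply hα1
    have h2 : α * α = α * 1 := by rw [mul_one]; linear_combination h
    exact mul_left_cancel₀ hα0 h2
  have hIl : Complex.I * l ≠ 0 := mul_ne_zero Complex.I_ne_zero hl
  have hnIl : -Complex.I * l ≠ 0 := by
    rw [neg_mul]; exact neg_ne_zero.mpr hIl
  -- distinctness of the three exponents
  have h12 : -Complex.I * l ≠ -Complex.I * α * l := by
    intro h
    apply hα1
    have h2 : (-Complex.I * l) * 1 = (-Complex.I * l) * α := by linear_combination h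
    exact (mul_left_cancel₀ hnIl h2).symm
  have h13 : -Complex.I * l ≠ -Complex.I * α ^ 2 * l := by
    intro h
    apply hα21
    have h2 : (-Complex.I * l) * 1 = (-Complex.I * l) * α ^ 2 := by linear_combination h
    exact (mul_left_cancel₀ hnIl h2).symm
  have h23 : -Complex.I * α * l ≠ -Complex.I * α ^ 2 * l := by
    intro h
    apply hα2α
    have h2 : (-Complex.I * l) * α ^ 2 = (-Complex.I * l) * α := by linear_combination -h
    exact mul_left_cancel₀ hnIl h2
  -- positivity of the max real part
  have hre1 : (-Complex.I * l).re = l.im := by simp [Complex.mul_re]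
  have hre2 : (-Complex.I * α * l).re = α.re * l.im + α.im * l.re := by
    simp [Complex.mul_re, Complex.mul_im]
  have hsum0 : (-Complex.I * l).re + (-Complex.I * α * l).re + (-Complex.I * α ^ 2 * l).re = 0 := by
    have h0 : (-Complex.I * l) + (-Complex.I * α * l) + (-Complex.I * α ^ 2 * l) = 0 := by
      linear_combination (-Complex.I * l) * hsum
    have := congrArg Complex.re h0
    simpa [Complex.add_re] using this
  set β0 : ℝ := max (max (-Complex.I * l).re (-Complex.I * α * l).re) (-Complex.I * α ^ 2 * l).re
    with hβ0def
  have hmax : 0 < β0 := by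
    by_contra hneg
    push_neg at hneg
    have m1 : (-Complex.I * l).re ≤ 0 :=
      le_trans (le_trans (le_max_left _ _) (le_max_left _ _)) hneg
    have m2 : (-Complex.I * α * l).re ≤ 0 :=
      le_trans (le_trans (le_max_right _ _) (le_max_left _ _)) hneg
    have m3 : (-Complex.I * α ^ 2 * l).re ≤ 0 := le_trans (le_max_right _ _) hneg
    have e1 : (-Complex.I * l).re = 0 := le_antisymm m1 (by linarith)
    have e2 : (-Complex.I * α * l).re = 0 := le_antisymm m2 (by linarith)
    have him : l.im = 0 := by rw [← hre1]; exact e1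
    have hlre : l.re = 0 := by
      have : α.re * l.im + α.im * l.re = 0 := by rw [← hre2]; exact e2
      rw [him] at this
      have : α.im * l.re = 0 := by linarith
      rcases mul_eq_zero.mp this with h | h
      · exact absurd h (ne_of_gt hαim)
      · exact h
    exact hl (Complex.ext hlre him)
  have hφ : φ = fun x : ℝ => (1 : ℂ) * Complex.exp ((-Complex.I * l) * x)
      + α ^ 2 * Complex.exp ((-Complex.I * α * l) * x)
      + α * Complex.exp ((-Complex.I * α ^ 2 * l) * x) := by
    funext x
    show Complex.exp (-Complex.I * l * (x:ℂ))
      + α ^ 2 * Complex.exp (-Complex.I * α * l * (x:ℂ))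
      + α * Complex.exp (-Complex.I * α ^ 2 * l * (x:ℂ)) = _
    ring
  have hφc : Continuous φ := by
    rw [hφ]
    exact ((continuous_const.mul (cont_exp_mul _)).add
      (continuous_const.mul (cont_exp_mul _))).add (continuous_const.mul (cont_exp_mul _))
  constructor
  · -- unboundedness
    rintro ⟨M, hM⟩
    obtain ⟨P, β, hP, hβ, hk⟩ := key3 (-Complex.I * l) (-Complex.I * α * l)
      (-Complex.I * α ^ 2 * l) 1 (α ^ 2) α φ hφ one_ne_zero (pow_ne_zero 2 hα0) hα0
      hmax h12 h13 h23
    refine no_exp_bound β (M * P) hβ (fun k => le_trans (hk k) ?_)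
    have hkP0 : (0:ℝ) ≤ (k : ℝ) * P := mul_nonneg (Nat.cast_nonneg k) hP.le
    calc (∫ x in Set.Ioc ((k : ℝ) * P) (((k : ℝ) + 1) * P), ‖φ x‖)
        ≤ ∫ _x in Set.Ioc ((k : ℝ) * P) (((k : ℝ) + 1) * P), M := by
          apply setIntegral_mono_on (hφc.norm.integrableOn_Ioc)
            (integrableOn_const measure_Ioc_lt_top.ne) measurableSet_Ioc
          intro x hx
          exact hM x (le_trans hkP0 hx.1.le)
      _ = M * P := by
          rw [setIntegral_const, measureReal_def, Real.volume_Ioc,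
            show ((k : ℝ) + 1) * P - (k : ℝ) * P = P by ring,
            ENNReal.toReal_ofReal hP.le, smul_eq_mul, mul_comm]
  · -- non-integrability
    intro A hA
    set ε : ℝ := β0 / 2 with hεdef
    have hε : 0 < ε := by positivity
    set c : ℂ := ((-ε : ℝ) : ℂ) with hcdef
    refine ⟨fun x : ℝ => Complex.exp (c * x), ε, hε, ?_, ?_, ?_⟩
    · have h1 : ContDiff ℝ (⊤ : ℕ∞) Complex.exp := Complex.contDiff_exp
      exact h1.comp (contDiff_const.mul Complex.ofRealCLM.contDiff)
    · intro n
      refine ⟨ε ^ n, fun x _hx => ?_⟩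
      rw [iter_deriv_exp_mul c n x]
      rw [norm_mul, norm_pow]
      have hcn : ‖c‖ = ε := by
        rw [hcdef, Complex.norm_real, Real.norm_eq_abs, abs_neg, abs_of_pos hε]
      have hce : ‖Complex.exp (c * (x:ℂ))‖ = Real.exp (-ε * x) := by
        rw [Complex.norm_exp]
        congr 1
        rw [hcdef, ← Complex.ofReal_mul, Complex.ofReal_re]
      rw [hcn, hce]
    · -- the product is not integrable
      have hG : (fun x : ℝ => A * φ x * Complex.exp (c * x))
          = fun x : ℝ => A * Complex.exp ((-Complex.I * l + c) * x)
            + A * α ^ 2 * Complex.exp ((-Complex.I * α * l + c) * x)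
            + A * α * Complex.exp ((-Complex.I * α ^ 2 * l + c) * x) := by
        funext x
        show A * (Complex.exp (-Complex.I * l * (x:ℂ))
          + α ^ 2 * Complex.exp (-Complex.I * α * l * (x:ℂ))
          + α * Complex.exp (-Complex.I * α ^ 2 * l * (x:ℂ))) * Complex.exp (c * x) = _
        rw [show ((-Complex.I * l + c) * (x:ℂ)) = -Complex.I * l * x + c * x by ring,
          show ((-Complex.I * α * l + c) * (x:ℂ)) = -Complex.I * α * l * x + c * x by ring,
          show ((-Complex.I * α ^ 2 * l + c) * (x:ℂ)) = -Complex.I * α ^ 2 * l * x + c * x by ring,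
          Complex.exp_add, Complex.exp_add, Complex.exp_add]
        ring
      have hshift : ∀ w : ℂ, (w + c).re = w.re - ε := by
        intro w
        rw [Complex.add_re, hcdef, Complex.ofReal_re]
        ring
      have hmax' : 0 < max (max (-Complex.I * l + c).re (-Complex.I * α * l + c).re)
          (-Complex.I * α ^ 2 * l + c).re := by
        rw [hshift, hshift, hshift, max_sub_sub_right, max_sub_sub_right, ← hβ0def]
        rw [hεdef]
        linarith
      have h12' : -Complex.I * l + c ≠ -Complex.I * α * l + c := by
        intro h; exact h12 (add_right_cancel h)
      have h13' : -Complex.I * l + c ≠ -Complex.I * α ^ 2 * l + c := by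
        intro h; exact h13 (add_right_cancel h)
      have h23' : -Complex.I * α * l + c ≠ -Complex.I * α ^ 2 * l + c := by
        intro h; exact h23 (add_right_cancel h)
      obtain ⟨P, β, hP, hβ, hk⟩ := key3 (-Complex.I * l + c) (-Complex.I * α * l + c)
        (-Complex.I * α ^ 2 * l + c) A (A * α ^ 2) (A * α)
        (fun x : ℝ => A * φ x * Complex.exp (c * x)) hG hA
        (mul_ne_zero hA (pow_ne_zero 2 hα0)) (mul_ne_zero hA hα0) hmax' h12' h13' h23'
      intro hInt
      refine no_exp_bound β (∫ x in Set.Ioi (0:ℝ), ‖A * φ x * Complex.exp (c * x)‖) hβ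
        (fun k => le_trans (hk k) ?_)
      apply setIntegral_mono_set hInt.norm
        (Filter.Eventually.of_forall fun x => norm_nonneg _)
      apply HasSubset.Subset.eventuallyLE
      intro x hx
      exact lt_of_le_of_lt (mul_nonneg (Nat.cast_nonneg k) hP.le) hx.1
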